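/- arXiv:1001.1279 — 2 statements merged into one kernel-verified Lean document; each statement's English description precedes it below -/
import Mathlib

section
/- Let X be a proper metric space, let γ : [0,∞) → X be a ray with Busemann function F_γ, let q ∈ X, and let t_i → ∞ be a divergent sequence. Suppose that for each i, σ_i : [0, d(q, γ(t_i))] → X is a minimal geodesic segment (an isometric embedding) with σ_i(0) = q and σ_i(d(q,γ(t_i))) = γ(t_i), and suppose the maps σ_i converge pointwise (uniformly on compact subsets) to a ray σ : [0,∞) → X with σ(0) = q. Then F_γ(σ(s)) = F_γ(q) + s for all s ≥ 0. -/
open Filter Set Topology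

/-! Since `t ↦ t - d(x, γ t)` is nondecreasing along a ray, `F_γ(x)` dominates each of its
values, and `F_γ` is `1`-Lipschitz. Lipschitz continuity and `d(q, σ s) = s` give
`F_γ(σ s) ≤ F_γ(q) + s`. Conversely, `σ_i(s)` lies on a minimal segment ending at `γ(t_i)`, so
`F_γ(σ_i s) ≥ t_i - d(σ_i s, γ t_i) = t_i - d(q, γ t_i) + s`; letting `i → ∞` and using
Lipschitz continuity once more yields `F_γ(σ s) ≥ F_γ(q) + s`. -/

section Ray

variable {X : Type*} [PseudoMetricSpace X]

def IsRay (γ : ℝ → X) : Prop :=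
  ∀ s t : ℝ, 0 ≤ s → 0 ≤ t → dist (γ s) (γ t) = |s - t|

namespace IsRay

variable {γ : ℝ → X}

theorem monotoneOn_sub_dist (hγ : IsRay γ) (x : X) :
    MonotoneOn (fun t => t - dist x (γ t)) (Ici 0) := by
  intro t ht t' ht' htt'
  have h := dist_triangle x (γ t) (γ t')
  rw [hγ t t' ht ht', abs_sub_comm, abs_of_nonneg (sub_nonneg.2 htt')] at h
  dsimp only
  linarith

theorem sub_dist_zero_le_dist (hγ : IsRay γ) (x : X) {t : ℝ} (ht : 0 ≤ t) :
    t - dist x (γ 0) ≤ dist x (γ t) := by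
  have h := dist_triangle (γ 0) x (γ t)
  rw [hγ 0 t le_rfl ht, zero_sub, abs_neg, abs_of_nonneg ht, dist_comm] at h
  linarith

theorem sub_dist_le_of_tendsto (hγ : IsRay γ) {x : X} {b : ℝ}
    (hb : Tendsto (fun t => t - dist x (γ t)) atTop (𝓝 b)) {t : ℝ} (ht : 0 ≤ t) :
    t - dist x (γ t) ≤ b :=
  ge_of_tendsto hb <| by
    filter_upwards [eventually_ge_atTop t] with t' ht'
    exact hγ.monotoneOn_sub_dist x ht (ht.trans ht') ht'

end IsRay

theorem busemann_le_add_dist {γ : ℝ → X} {F : X → ℝ}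
    (hF : ∀ x : X, Tendsto (fun t : ℝ => t - dist x (γ t)) atTop (𝓝 (F x))) (x y : X) :
    F y ≤ F x + dist x y :=
  le_of_tendsto_of_tendsto (hF y) ((hF x).add_const _) <| Eventually.of_forall fun t => by
    dsimp only
    linarith [dist_triangle x y (γ t)]

end Ray

theorem busemann_along_asymptotic_ray_general
    {X : Type*} [MetricSpace X] (γ : ℝ → X)
    (hray : ∀ s t : ℝ, 0 ≤ s → 0 ≤ t → dist (γ s) (γ t) = |s - t|)
    (F : X → ℝ)
    (hF : ∀ x : X, Tendsto (fun t : ℝ => t - dist x (γ t)) atTop (nhds (F x)))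
    (q : X) (ti : ℕ → ℝ) (hti : Tendsto ti atTop atTop)
    (σi : ℕ → ℝ → X)
    (hσi_seg : ∀ i : ℕ, ∀ s t : ℝ, s ∈ Icc 0 (dist q (γ (ti i))) →
      t ∈ Icc 0 (dist q (γ (ti i))) → dist (σi i s) (σi i t) = |s - t|)
    (hσi_end : ∀ i : ℕ, σi i (dist q (γ (ti i))) = γ (ti i))
    (σ : ℝ → X) (hσ_start : σ 0 = q)
    (hσ_ray : ∀ s t : ℝ, 0 ≤ s → 0 ≤ t → dist (σ s) (σ t) = |s - t|)
    (hconv : ∀ s : ℝ, 0 ≤ s → Tendsto (fun i : ℕ => σi i s) atTop (nhds (σ s))) :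
    ∀ s : ℝ, 0 ≤ s → F (σ s) = F q + s := by
  intro s hs
  have hqσ : dist q (σ s) = s := by
    rw [← hσ_start, hσ_ray 0 s le_rfl hs, zero_sub, abs_neg, abs_of_nonneg hs]
  refine le_antisymm ((busemann_le_add_dist hF q (σ s)).trans_eq (by rw [hqσ])) ?_
  have hlim : Tendsto (fun i => ti i - dist q (γ (ti i)) + s - dist (σi i s) (σ s))
      atTop (𝓝 (F q + s)) := by
    simpa using (((hF q).comp hti).add_const s).sub
      (tendsto_iff_dist_tendsto_zero.1 (hconv s hs))
  refine le_of_tendsto hlim ?_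
  filter_upwards [hti.eventually_ge_atTop (s + dist q (γ 0))] with i hi
  have hti0 : 0 ≤ ti i := by linarith [dist_nonneg (x := q) (y := γ 0)]
  have hsD : s ≤ dist q (γ (ti i)) := by linarith [IsRay.sub_dist_zero_le_dist hray q hti0]
  have hseg := hσi_seg i s _ ⟨hs, hsD⟩ ⟨dist_nonneg, le_rfl⟩
  rw [hσi_end i, abs_of_nonpos (by linarith)] at hseg
  calc ti i - dist q (γ (ti i)) + s - dist (σi i s) (σ s)
      = ti i - dist (σi i s) (γ (ti i)) - dist (σi i s) (σ s) := by rw [hseg]; ring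
    _ ≤ F (σi i s) - dist (σi i s) (σ s) := by
      gcongr; exact IsRay.sub_dist_le_of_tendsto hray (hF _) hti0
    _ ≤ F (σ s) := by linarith [busemann_le_add_dist hF (σ s) (σi i s), dist_comm (σ s) (σi i s)]

/-- Proposition 3.3 (metric-space content): if `σ` is a ray emanating from `q`
obtained as a limit of minimal geodesic segments from `q` to `γ(t_i)` for a
divergent sequence `t_i → ∞`, then the Busemann function `F_γ` increases at unit
speed along `σ`, i.e. `F_γ(σ(s)) = F_γ(q) + s` for all `s ≥ 0`. -/
theorem busemann_along_asymptotic_ray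
    {X : Type*} [MetricSpace X] [ProperSpace X] (γ : ℝ → X)
    (hray : ∀ s t : ℝ, 0 ≤ s → 0 ≤ t → dist (γ s) (γ t) = |s - t|)
    (F : X → ℝ)
    (hF : ∀ x : X, Tendsto (fun t : ℝ => t - dist x (γ t)) atTop (nhds (F x)))
    (q : X) (ti : ℕ → ℝ) (hti : Tendsto ti atTop atTop)
    (σi : ℕ → ℝ → X)
    (hσi_seg : ∀ i : ℕ, ∀ s t : ℝ, s ∈ Icc 0 (dist q (γ (ti i))) →
      t ∈ Icc 0 (dist q (γ (ti i))) → dist (σi i s) (σi i t) = |s - t|)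
    (hσi_start : ∀ i : ℕ, σi i 0 = q)
    (hσi_end : ∀ i : ℕ, σi i (dist q (γ (ti i))) = γ (ti i))
    (σ : ℝ → X) (hσ_start : σ 0 = q)
    (hσ_ray : ∀ s t : ℝ, 0 ≤ s → 0 ≤ t → dist (σ s) (σ t) = |s - t|)
    (hconv : ∀ s : ℝ, 0 ≤ s → Tendsto (fun i : ℕ => σi i s) atTop (nhds (σ s))) :
    ∀ s : ℝ, 0 ≤ s → F (σ s) = F q + s :=
  busemann_along_asymptotic_ray_general γ hray F hF q ti hti σi hσi_seg hσi_end σ hσ_start hσ_ray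
    hconv
end

section
/- Let X be a proper metric space that contains no straight line, i.e. no map γ : ℝ → X with d(γ(s),γ(t)) = |s−t| for all s,t ∈ ℝ. Then for every p ∈ X and every r₁ > 0 there exists r₂ > r₁ such that every ray γ : [0,∞) → X emanating from a point γ(0) with d(p, γ(0)) ≥ r₂ satisfies d(p, γ(t)) ≥ r₁ for all t ≥ 0; that is, no ray emanating from a point outside the ball B(p, r₂) passes through the ball B(p, r₁). -/
/-!
Suppose rays `γₙ` start at distance at least `r₁ + n + 1` from `p` but pass through `B(p, r₁)` at
time `tₙ`. By the triangle inequality `tₙ > n`, so the recentred maps `s ↦ γₙ (tₙ + s)` are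
isometric on ever larger intervals `[-tₙ, ∞)` and send `0` into `B(p, r₁)`. In a proper space a
pointwise limit along an ultrafilter exists, and it is a straight line.
-/

open Filter Metric Topology

theorem exists_dist_eq_of_eventually_dist_eq {ι α X : Type*} [PseudoMetricSpace α]
    [PseudoMetricSpace X] [ProperSpace X] (l : Filter ι) [l.NeBot] (f : ι → α → X) (a : α)
    (p : X) (R : ℝ) (hbdd : ∀ᶠ i in l, dist (f i a) p ≤ R)
    (hdist : ∀ s t, ∀ᶠ i in l, dist (f i s) (f i t) = dist s t) :
    ∃ g : α → X, ∀ s t, dist (g s) (g t) = dist s t := by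
  have hU : (Ultrafilter.of l : Filter ι) ≤ l := Ultrafilter.of_le l
  have hlim : ∀ s, ∃ x, Tendsto (fun i => f i s) (Ultrafilter.of l) (𝓝 x) := by
    intro s
    have hball : ∀ᶠ i in l, f i s ∈ closedBall p (dist s a + R) := by
      filter_upwards [hbdd, hdist s a] with i hR hsa
      calc dist (f i s) p ≤ dist (f i s) (f i a) + dist (f i a) p := dist_triangle _ _ _
        _ ≤ dist s a + R := by rw [hsa]; gcongr
    obtain ⟨x, -, hx⟩ := (isCompact_closedBall p _).ultrafilter_le_nhds
      ((Ultrafilter.of l).map fun i => f i s) (le_principal_iff.2 (hU hball))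
    exact ⟨x, hx⟩
  choose g hg using hlim
  refine ⟨g, fun s t => tendsto_nhds_unique ((hg s).dist (hg t)) ?_⟩
  exact tendsto_const_nhds.congr' (EventuallyEq.symm (hU (hdist s t)))

section Ray

variable {X : Type*} [PseudoMetricSpace X] {γ : ℝ → X}

theorem dist_sub_dist_le_of_ray
    (hγ : ∀ s t : ℝ, 0 ≤ s → 0 ≤ t → dist (γ s) (γ t) = |s - t|) (p : X) {t : ℝ} (ht : 0 ≤ t) :
    dist p (γ 0) - dist p (γ t) ≤ t := by
  have hγt : dist (γ t) (γ 0) = t := by rw [hγ t 0 ht le_rfl, sub_zero, abs_of_nonneg ht]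
  linarith [dist_triangle p (γ t) (γ 0)]

theorem dist_add_add_of_ray
    (hγ : ∀ s t : ℝ, 0 ≤ s → 0 ≤ t → dist (γ s) (γ t) = |s - t|) {t₀ s t : ℝ}
    (hs : 0 ≤ t₀ + s) (ht : 0 ≤ t₀ + t) :
    dist (γ (t₀ + s)) (γ (t₀ + t)) = dist s t := by
  rw [hγ _ _ hs ht, Real.dist_eq, add_sub_add_left_eq_sub]

end Ray

/-- Lemma 2.2 (metric-space content): in a proper metric space containing no
straight line, for every point `p` and every `r₁ > 0` there exists `r₂ > r₁` such
that no ray emanating from a point outside the ball `B(p, r₂)` passes through the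
ball `B(p, r₁)`. -/
theorem rays_avoid_ball_of_no_line
    {X : Type*} [MetricSpace X] [ProperSpace X]
    (hnoline : ¬ ∃ γ : ℝ → X, ∀ s t : ℝ, dist (γ s) (γ t) = |s - t|) :
    ∀ p : X, ∀ r₁ : ℝ, 0 < r₁ → ∃ r₂ : ℝ, r₁ < r₂ ∧
      ∀ γ : ℝ → X, (∀ s t : ℝ, 0 ≤ s → 0 ≤ t → dist (γ s) (γ t) = |s - t|) →
        r₂ ≤ dist p (γ 0) → ∀ t : ℝ, 0 ≤ t → r₁ ≤ dist p (γ t) := by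
  intro p r₁ _
  by_contra! hcon
  choose γ hγ hfar T hT hnear using fun n : ℕ =>
    hcon (r₁ + n + 1) (by linarith [n.cast_nonneg (α := ℝ)])
  have hTn (n : ℕ) : (n : ℝ) ≤ T n := by
    linarith [dist_sub_dist_le_of_ray (hγ n) p (hT n), hfar n, hnear n]
  have hT_atTop : Tendsto T atTop atTop := tendsto_atTop_mono hTn tendsto_natCast_atTop_atTop
  refine hnoline ?_
  simpa only [Real.dist_eq] using exists_dist_eq_of_eventually_dist_eq atTop
    (fun n s => γ n (T n + s)) 0 p r₁
    (Eventually.of_forall fun n => by simpa [dist_comm] using (hnear n).le)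
    fun s t => by
      filter_upwards [hT_atTop.eventually_ge_atTop (-s), hT_atTop.eventually_ge_atTop (-t)]
        with n hs ht
      exact dist_add_add_of_ray (hγ n) (by linarith) (by linarith)
end
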